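/- arXiv:math/0112196 — 5 statements merged into one kernel-verified Lean document; each statement's English description precedes it below -/
import Mathlib

section
/- For every real number r, ∫_ℝ (2/(e^x + e^{-x})) e^{irx} dx = π / cosh(πr/2); that is, the Fourier transform of the hyperbolic secant sech(x) = 2/(e^x+e^{-x}) is π·sech(πr/2). -/
/-!
Substituting `t = eˣ`, the integral is twice the Mellin transform of `1 / (1 + t²)` at `1 + ir`,
which is the Mellin transform of `1 / (1 + t)` at `s = (1 + ir) / 2`. The substitution
`u = t / (1 + t)` turns the latter into the Beta integral `B(s, 1 - s) = Γ(s) Γ(1 - s)`, which the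
reflection formula evaluates to `π / sin (π s) = π / cosh (π r / 2)`.
-/

open MeasureTheory Real Set

theorem mellin_eq_integral_cexp_mul_smul {E : Type*} [NormedAddCommGroup E] [NormedSpace ℂ E]
    (f : ℝ → E) (s : ℂ) : mellin f s = ∫ x : ℝ, Complex.exp (s * x) • f (rexp x) := by
  rw [mellin, ← Real.range_exp, ← image_univ,
    integral_image_eq_integral_abs_deriv_smul MeasurableSet.univ
      (fun x _ => (Real.hasDerivAt_exp x).hasDerivWithinAt) Real.exp_injective.injOn,
    setIntegral_univ]
  congr 1 with x
  rw [abs_of_pos (exp_pos x), ← smul_assoc, Complex.ofReal_exp,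
    Complex.cpow_def_of_ne_zero (Complex.exp_ne_zero _),
    Complex.log_exp (by simp [pi_pos]) (by simpa using pi_nonneg), Complex.real_smul,
    Complex.ofReal_exp, ← Complex.exp_add]
  ring_nf

theorem image_div_one_add_Ioi : (fun t : ℝ => t / (1 + t)) '' Ioi 0 = Ioo 0 1 := by
  ext y
  constructor
  · rintro ⟨t, ht, rfl⟩
    have ht : 0 < t := ht
    exact ⟨by positivity, (div_lt_one (by positivity)).2 (by linarith)⟩
  · rintro ⟨hy0, hy1⟩
    refine ⟨y / (1 - y), div_pos hy0 (by linarith), ?_⟩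
    have : 1 - y ≠ 0 := by linarith
    field_simp
    ring

theorem hasDerivAt_div_one_add {t : ℝ} (ht : 0 < t) :
    HasDerivAt (fun t : ℝ => t / (1 + t)) ((1 + t) ^ 2)⁻¹ t :=
  ((hasDerivAt_id' t).fun_div ((hasDerivAt_id' t).const_add 1)
    (by positivity : 1 + t ≠ 0)).congr_deriv (by ring)

theorem injOn_div_one_add : InjOn (fun t : ℝ => t / (1 + t)) (Ioi 0) := by
  intro a ha b hb h
  have ha : 0 < a := ha
  have hb : 0 < b := hb
  simp only at h
  field_simp at h
  linarith

theorem abs_inv_sq_one_add_smul_betaIntegrand (u v : ℂ) {t : ℝ} (ht : 0 < t) :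
    |((1 + t) ^ 2)⁻¹| •
        (((t / (1 + t) : ℝ) : ℂ) ^ (u - 1) * (1 - ((t / (1 + t) : ℝ) : ℂ)) ^ (v - 1))
      = (t : ℂ) ^ (u - 1) • (1 + (t : ℂ)) ^ (-(u + v)) := by
  have h1t : 0 < 1 + t := by positivity
  have hne : (1 + (t : ℂ)) ≠ 0 := by exact_mod_cast h1t.ne'
  have hinv (z : ℂ) : (((1 + t)⁻¹ : ℝ) : ℂ) ^ z = (1 + (t : ℂ)) ^ (-z) := by
    rw [Complex.ofReal_inv, Complex.inv_cpow _ _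
      (by rw [Complex.arg_ofReal_of_nonneg h1t.le]; exact pi_ne_zero.symm), Complex.cpow_neg]
    push_cast
    rfl
  have hsq : ((((1 + t) ^ 2)⁻¹ : ℝ) : ℂ) = (1 + (t : ℂ)) ^ (-2 : ℂ) := by
    rw [Complex.cpow_neg, Complex.cpow_ofNat]
    push_cast
    rfl
  rw [abs_of_pos (by positivity), div_eq_mul_inv, Complex.ofReal_mul,
    show (1 : ℂ) - t * ((1 + t)⁻¹ : ℝ) = ((1 + t)⁻¹ : ℝ) by push_cast; field_simp; ring,
    Complex.mul_cpow_ofReal_nonneg ht.le (by positivity), hinv, hinv, Complex.real_smul,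
    smul_eq_mul, hsq, mul_assoc, ← Complex.cpow_add _ _ hne, mul_left_comm,
    ← Complex.cpow_add _ _ hne]
  ring_nf

theorem betaIntegral_eq_mellin (u v : ℂ) :
    Complex.betaIntegral u v = mellin (fun t : ℝ => (1 + (t : ℂ)) ^ (-(u + v))) u := by
  rw [Complex.betaIntegral, intervalIntegral.integral_of_le zero_le_one,
    integral_Ioc_eq_integral_Ioo, ← image_div_one_add_Ioi,
    integral_image_eq_integral_abs_deriv_smul measurableSet_Ioi
      (fun t ht => (hasDerivAt_div_one_add ht).hasDerivWithinAt) injOn_div_one_add]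
  exact setIntegral_congr_fun measurableSet_Ioi fun t ht =>
    abs_inv_sq_one_add_smul_betaIntegrand u v ht

theorem mellin_one_add_inv {s : ℂ} (hs₀ : 0 < s.re) (hs₁ : s.re < 1) :
    mellin (fun t : ℝ => (1 + (t : ℂ))⁻¹) s = π / Complex.sin (π * s) := by
  have hbeta := betaIntegral_eq_mellin s (1 - s)
  simp only [add_sub_cancel, Complex.cpow_neg_one] at hbeta
  rw [← hbeta, Complex.betaIntegral_eq_Gamma_mul_div _ _ hs₀ (by simpa using hs₁),
    add_sub_cancel, Complex.Gamma_one, div_one, Complex.Gamma_mul_Gamma_one_sub]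

theorem stmt_1 (r : ℝ) :
    ∫ x : ℝ, ((2 / (Real.exp x + Real.exp (-x)) : ℝ) : ℂ) * Complex.exp (Complex.I * r * x)
      = ((π / Real.cosh (π * r / 2) : ℝ) : ℂ) := by
  set s : ℂ := 1 + r * Complex.I
  have hsech (x : ℝ) :
      ((2 / (Real.exp x + Real.exp (-x)) : ℝ) : ℂ) * Complex.exp (Complex.I * r * x)
        = 2 * (Complex.exp (s * x) • (1 + ((rexp x ^ (2 : ℝ) : ℝ) : ℂ))⁻¹) := by
    rw [← Real.exp_mul, mul_two, Real.exp_add, Real.exp_neg, smul_eq_mul,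
      show s * x = x + Complex.I * r * x by ring, Complex.exp_add, ← Complex.ofReal_exp,
      show 2 / (rexp x + (rexp x)⁻¹) = 2 * rexp x / (1 + rexp x * rexp x) by field_simp; ring]
    push_cast
    field_simp
  calc _ = 2 * mellin (fun t : ℝ => (1 + ((t ^ (2 : ℝ) : ℝ) : ℂ))⁻¹) s := by
        simp_rw [hsech, integral_const_mul, mellin_eq_integral_cexp_mul_smul]
    _ = π / Complex.sin (π * (s / 2)) := by
        rw [mellin_comp_rpow (fun t : ℝ => (1 + (t : ℂ))⁻¹), mellin_one_add_inv]
        · rw [abs_two, Complex.real_smul]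
          push_cast
          ring
        · simp [s]
        · norm_num [s]
    _ = _ := by
        rw [show (π : ℂ) * (s / 2) = (π * r / 2 : ℝ) * Complex.I + π / 2 by push_cast [s]; ring,
          Complex.sin_add_pi_div_two, Complex.cos_mul_I, ← Complex.ofReal_cosh,
          Complex.ofReal_div]
end

section
/- Let p > 0 and let g : ℝ → ℝ be defined by g(x) = (1 - |x|/p)·cos(πx/p) + (1/π)·sin(π|x|/p) for |x| ≤ p and g(x) = 0 for |x| > p. Then for every real r with p²r² ≠ π², ∫_ℝ g(x) e^{irx} dx = 8pπ²·cos²(pr/2) / (π² - p²r²)². In particular this Fourier transform is nonnegative on ℝ. -/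
/-!
Write `φ_c(x) = (1 - x/p) cos(c x) + sin(c x)/π`, so that `g = φ_{π/p}` on `[0, p]`. Since `g` is
even and supported in `[-p, p]`, its Fourier transform at `r` is `2 ∫₀ᵖ φ_{π/p}(x) cos(r x) dx`,
and the product-to-sum formulas turn this into `∫₀ᵖ φ_{π/p - r} + ∫₀ᵖ φ_{π/p + r}`. For `c ≠ 0`
an explicit antiderivative gives `∫₀ᵖ φ_c = (1 - cos(c p)) (1/(p c²) + 1/(π c))`, and for
`c = π/p ∓ r` one has `1 - cos(c p) = 1 + cos(p r) = 2 cos²(p r/2)`, which yields the formula.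
At the two excluded frequencies `r = ±π/p` the transform is `∫₀ᵖ φ_0 + ∫₀ᵖ φ_{2π/p} = p/2 + 0`.
-/

open MeasureTheory Real

theorem integral_ofReal_mul_cexp_eq_two_mul_integral_cos {g : ℝ → ℝ} {p : ℝ} (hp : 0 ≤ p)
    (hg : Continuous g) (heven : ∀ x, g (-x) = g x) (hsupp : ∀ x, p < |x| → g x = 0) (r : ℝ) :
    ∫ x, (g x : ℂ) * Complex.exp (Complex.I * r * x)
      = ((2 * ∫ x in (0 : ℝ)..p, g x * cos (r * x) : ℝ) : ℂ) := by
  set h : ℝ → ℂ := fun x => (g x : ℂ) * Complex.exp (Complex.I * r * x)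
  have hh : Continuous h := by fun_prop
  have hzero : ∀ x ∉ Set.Icc (-p) p, h x = 0 := fun x hx => by
    rw [Set.mem_Icc, ← abs_le, not_le] at hx
    simp [h, hsupp x hx]
  have hsymm : ∀ x : ℝ, h (-x) + h x = ((2 * (g x * cos (r * x)) : ℝ) : ℂ) := fun x => by
    simp only [h, heven, Complex.ofReal_neg, mul_neg, Complex.ofReal_mul, Complex.ofReal_ofNat,
      Complex.ofReal_cos]
    rw [Complex.cos, show Complex.I * r * x = r * x * Complex.I by ring,
      show -(r * x * Complex.I) = -(r * x) * Complex.I by ring]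
    ring
  calc ∫ x, h x
      = ∫ x in (-p)..p, h x := by
        rw [← setIntegral_eq_integral_of_forall_compl_eq_zero hzero, integral_Icc_eq_integral_Ioc,
          intervalIntegral.integral_of_le (by linarith)]
    _ = ∫ x in (0 : ℝ)..p, (h (-x) + h x) := by
        rw [← intervalIntegral.integral_add_adjacent_intervals (b := 0)
            (hh.intervalIntegrable _ _) (hh.intervalIntegrable _ _),
          intervalIntegral.integral_add (f := fun x => h (-x))
            ((hh.comp continuous_neg).intervalIntegrable _ _)
            (hh.intervalIntegrable _ _), intervalIntegral.integral_comp_neg, neg_zero]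
    _ = _ := by
        simp only [hsymm, intervalIntegral.integral_ofReal, intervalIntegral.integral_const_mul]

noncomputable def profile (p c x : ℝ) : ℝ := (1 - x / p) * cos (c * x) + sin (c * x) / π

@[fun_prop]
theorem continuous_profile (p c : ℝ) : Continuous (profile p c) := by
  unfold profile
  fun_prop

theorem two_mul_profile_mul_cos (p a r x : ℝ) :
    2 * (profile p a x * cos (r * x)) = profile p (a - r) x + profile p (a + r) x := by
  simp only [profile, sub_mul, add_mul, cos_sub, cos_add, sin_sub, sin_add]
  ring

theorem integral_profile {p c : ℝ} (hp : p ≠ 0) (hc : c ≠ 0) :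
    ∫ x in (0 : ℝ)..p, profile p c x = (1 - cos (c * p)) * (1 / (p * c ^ 2) + 1 / (π * c)) := by
  have hderiv : ∀ x ∈ Set.uIcc 0 p, HasDerivAt
      (fun x => (1 - x / p) * sin (c * x) / c - cos (c * x) * (1 / (p * c ^ 2) + 1 / (π * c)))
      (profile p c x) x := fun x _ => by
    have hsin := (hasDerivAt_sin (c * x)).comp x ((hasDerivAt_id x).const_mul c)
    have hcos := (hasDerivAt_cos (c * x)).comp x ((hasDerivAt_id x).const_mul c)
    have hlin := ((hasDerivAt_id x).div_const p).const_sub 1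
    refine (((hlin.mul hsin).div_const c).sub (hcos.mul_const _)).congr_deriv ?_
    simp only [profile, Function.comp_apply, id]
    field_simp [pi_ne_zero]
    ring
  rw [intervalIntegral.integral_eq_sub_of_hasDerivAt hderiv
    ((continuous_profile p c).intervalIntegrable _ _)]
  simp only [div_self hp, sub_self, zero_mul, mul_zero, sin_zero, cos_zero, zero_div]
  ring

theorem integral_profile_zero {p : ℝ} (hp : p ≠ 0) : ∫ x in (0 : ℝ)..p, profile p 0 x = p / 2 := by
  simp only [profile, zero_mul, cos_zero, sin_zero, zero_div, mul_one, add_zero]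
  rw [intervalIntegral.integral_sub intervalIntegrable_const
      (intervalIntegral.intervalIntegrable_id.div_const p), intervalIntegral.integral_div,
    integral_id, intervalIntegral.integral_const, smul_eq_mul]
  field_simp
  ring

theorem integral_profile_add_integral_profile {p r : ℝ} (hp : 0 < p) (hr : p ^ 2 * r ^ 2 ≠ π ^ 2) :
    (∫ x in (0 : ℝ)..p, profile p (π / p - r) x) + ∫ x in (0 : ℝ)..p, profile p (π / p + r) x
      = 8 * p * π ^ 2 * cos (p * r / 2) ^ 2 / (π ^ 2 - p ^ 2 * r ^ 2) ^ 2 := by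
  have hden : (π - p * r) * (p * r + π) ≠ 0 := fun h => hr (by linarith)
  obtain ⟨hsub, hadd⟩ := mul_ne_zero_iff.1 hden
  have hcos : cos (p * r) = 2 * cos (p * r / 2) ^ 2 - 1 := by
    rw [← cos_two_mul]; ring_nf
  rw [show π / p - r = (π - p * r) / p by field_simp,
    show π / p + r = (p * r + π) / p by field_simp; ring,
    integral_profile hp.ne' (div_ne_zero hsub hp.ne'),
    integral_profile hp.ne' (div_ne_zero hadd hp.ne'), div_mul_cancel₀ _ hp.ne',
    div_mul_cancel₀ _ hp.ne', cos_pi_sub, cos_add_pi, hcos]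
  field_simp [pi_ne_zero]
  ring

theorem integral_profile_add_integral_profile_of_sq_eq {p r : ℝ} (hp : 0 < p)
    (hr : p ^ 2 * r ^ 2 = π ^ 2) :
    (∫ x in (0 : ℝ)..p, profile p (π / p - r) x) + ∫ x in (0 : ℝ)..p, profile p (π / p + r) x
      = p / 2 := by
  have hvanish : ∫ x in (0 : ℝ)..p, profile p (2 * π / p) x = 0 := by
    rw [integral_profile hp.ne' (by positivity), div_mul_cancel₀ _ hp.ne', cos_two_pi, sub_self,
      zero_mul]
  have hr' : r = π / p ∨ r = -(π / p) := by
    apply sq_eq_sq_iff_eq_or_eq_neg.1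
    field_simp
    linarith
  rcases hr' with rfl | rfl
  · rw [sub_self, ← two_mul, ← mul_div_assoc, hvanish, integral_profile_zero hp.ne', add_zero]
  · rw [sub_neg_eq_add, ← two_mul, ← mul_div_assoc, hvanish, ← sub_eq_add_neg, sub_self,
      integral_profile_zero hp.ne', zero_add]

section

variable {p : ℝ} {g : ℝ → ℝ}
  (hg : ∀ x : ℝ, g x = if |x| ≤ p then
    (1 - |x| / p) * cos (π * x / p) + (1 / π) * sin (π * |x| / p) else 0)
include hg

theorem continuous_of_eq_ite (hp : p ≠ 0) : Continuous g := by
  rw [funext hg]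
  refine Continuous.if_le (by fun_prop) continuous_const (by fun_prop) continuous_const ?_
  intro x hx
  rw [hx, div_self hp, mul_div_cancel_right₀ _ hp, sin_pi]
  ring

theorem even_of_eq_ite (x : ℝ) : g (-x) = g x := by
  simp only [hg, abs_neg, mul_neg, neg_div, cos_neg]

theorem eq_zero_of_lt_abs_of_eq_ite {x : ℝ} (hx : p < |x|) : g x = 0 := by
  rw [hg, if_neg hx.not_ge]

theorem eq_profile_of_eq_ite {x : ℝ} (hx : x ∈ Set.Icc 0 p) : g x = profile p (π / p) x := by
  rw [hg, abs_of_nonneg hx.1, if_pos hx.2, profile]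
  ring_nf

theorem two_mul_integral_mul_cos_of_eq_ite (hp : 0 ≤ p) (r : ℝ) :
    2 * ∫ x in (0 : ℝ)..p, g x * cos (r * x)
      = (∫ x in (0 : ℝ)..p, profile p (π / p - r) x)
        + ∫ x in (0 : ℝ)..p, profile p (π / p + r) x := by
  rw [← intervalIntegral.integral_add ((continuous_profile _ _).intervalIntegrable _ _)
    ((continuous_profile _ _).intervalIntegrable _ _), ← intervalIntegral.integral_const_mul]
  refine intervalIntegral.integral_congr fun x hx => ?_
  rw [Set.uIcc_of_le hp] at hx
  simp only [eq_profile_of_eq_ite hg hx, two_mul_profile_mul_cos]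

end

theorem stmt_3 (p : ℝ) (hp : 0 < p) (g : ℝ → ℝ)
    (hg : ∀ x : ℝ, g x = if |x| ≤ p then
      (1 - |x|/p) * Real.cos (π * x / p) + (1/π) * Real.sin (π * |x| / p) else 0) :
    (∀ r : ℝ, p^2 * r^2 ≠ π^2 →
      ∫ x : ℝ, (g x : ℂ) * Complex.exp (Complex.I * r * x)
        = ((8 * p * π^2 * Real.cos (p*r/2)^2 / (π^2 - p^2*r^2)^2 : ℝ) : ℂ)) ∧
    (∀ r : ℝ, 0 ≤ (∫ x : ℝ, (g x : ℂ) * Complex.exp (Complex.I * r * x)).re) := by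
  have hFT : ∀ r : ℝ, ∫ x : ℝ, (g x : ℂ) * Complex.exp (Complex.I * r * x)
      = (((∫ x in (0 : ℝ)..p, profile p (π / p - r) x)
          + ∫ x in (0 : ℝ)..p, profile p (π / p + r) x : ℝ) : ℂ) := fun r => by
    rw [integral_ofReal_mul_cexp_eq_two_mul_integral_cos hp.le (continuous_of_eq_ite hg hp.ne')
      (even_of_eq_ite hg) (fun x => eq_zero_of_lt_abs_of_eq_ite hg) r,
      two_mul_integral_mul_cos_of_eq_ite hg hp.le]
  refine ⟨fun r hr => by rw [hFT, integral_profile_add_integral_profile hp hr], fun r => ?_⟩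
  rw [hFT, Complex.ofReal_re]
  by_cases hr : p ^ 2 * r ^ 2 = π ^ 2
  · rw [integral_profile_add_integral_profile_of_sq_eq hp hr]
    positivity
  · rw [integral_profile_add_integral_profile hp hr]
    positivity
end

section
/- Let p > 0 and let g : ℝ → ℝ be defined by g(x) = (4π(1 - |x|/p) + 2π(1 - |x|/p)·cos(2πx/p) + 3·sin(2π|x|/p)) / (6π) for |x| ≤ p and g(x) = 0 for |x| > p. Then for every real r with r ≠ 0 and p²r² ≠ 4π², ∫_ℝ g(x) e^{irx} dx = 128π⁴·sin²(pr/2) / (3p·r²·(4π² - p²r²)²). In particular this Fourier transform is nonnegative on ℝ. -/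
/-!
Since `g` is even and vanishes outside `[-p, p]`, its Fourier transform is
`2 ∫₀ᵖ g(x) cos(rx) dx`. With `a = 2π/p`, the product-to-sum formulas reduce this to the
integrals of `(1 - x/p) cos(kx)` and `sin(kx)` over `[0, p]` for `k ∈ {r, r + a, r - a}`; since
`(r ± a) p = rp ± 2π`, each of them is a rational multiple of `1 - cos(rp) = 2 sin²(pr/2)`.
At the three excluded frequencies the transform is nonnegative by continuity.
-/

open MeasureTheory Real Set

lemma integral_sin_mul_eq {p k : ℝ} (hk : k ≠ 0) :
    ∫ x in (0:ℝ)..p, sin (k * x) = (1 - cos (k * p)) / k := by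
  rw [intervalIntegral.integral_comp_mul_left (fun x => sin x) hk, integral_sin]
  simp only [mul_zero, cos_zero, smul_eq_mul]
  field_simp

lemma integral_one_sub_div_mul_cos {p k : ℝ} (hp : p ≠ 0) (hk : k ≠ 0) :
    ∫ x in (0:ℝ)..p, (1 - x / p) * cos (k * x) = (1 - cos (k * p)) / (p * k ^ 2) := by
  have hderiv : ∀ x, HasDerivAt (fun y => (1 - y / p) * sin (k * y) / k - cos (k * y) / (p * k ^ 2))
      ((1 - x / p) * cos (k * x)) x := by
    intro x
    have hsin := ((hasDerivAt_id x).const_mul k).sin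
    have hcos := ((hasDerivAt_id x).const_mul k).cos
    have hlin := ((hasDerivAt_id x).div_const p).const_sub 1
    refine (((hlin.mul hsin).div_const k).sub (hcos.div_const (p * k ^ 2))).congr_deriv ?_
    simp only [id]
    field_simp
    ring
  rw [intervalIntegral.integral_eq_sub_of_hasDerivAt (fun x _ => hderiv x)
    ((by fun_prop : Continuous fun x => (1 - x / p) * cos (k * x)).intervalIntegrable _ _)]
  field_simp
  simp only [sub_self, mul_zero, zero_mul, zero_sub, sub_zero, sin_zero, cos_zero, sub_neg_eq_add]
  ring

lemma integral_mul_exp_I_mul_of_even {g : ℝ → ℝ} (hg : Integrable g) (heven : ∀ x, g (-x) = g x)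
    (r : ℝ) :
    ∫ x, (g x : ℂ) * Complex.exp (Complex.I * r * x) = ((∫ x, g x * cos (r * x) : ℝ) : ℂ) := by
  have hmul {f : ℝ → ℝ} (hf : Continuous f) (hf1 : ∀ x, |f x| ≤ 1) :
      Integrable fun x => g x * f x :=
    hg.mul_bdd hf.aestronglyMeasurable (c := 1) (Filter.Eventually.of_forall hf1)
  have hodd : ∫ x, g x * sin (r * x) = 0 := by
    have h := integral_neg_eq_self (fun x => g x * sin (r * x)) volume
    simp only [heven, mul_neg, sin_neg, integral_neg] at h
    linarith
  have hsplit : ∀ x : ℝ, (g x : ℂ) * Complex.exp (Complex.I * r * x)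
      = ((g x * cos (r * x) : ℝ) : ℂ) + ((g x * sin (r * x) : ℝ) : ℂ) * Complex.I := by
    intro x
    rw [show Complex.I * r * x = ((r * x : ℝ) : ℂ) * Complex.I by push_cast; ring,
      Complex.exp_mul_I]
    push_cast
    ring
  simp only [hsplit]
  rw [integral_add (hmul (by fun_prop) (fun x => abs_cos_le_one _)).ofReal
    ((hmul (by fun_prop) (fun x => abs_sin_le_one _)).ofReal.mul_const _),
    integral_mul_const, integral_complex_ofReal, integral_complex_ofReal, hodd]
  simp only [Complex.ofReal_zero, zero_mul, add_zero]

lemma integral_mul_cos_of_even_of_support {g : ℝ → ℝ} {p : ℝ} (hp : 0 ≤ p)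
    (heven : ∀ x, g (-x) = g x) (hsupp : ∀ x, p < |x| → g x = 0) (r : ℝ) :
    ∫ x, g x * cos (r * x) = 2 * ∫ x in (0:ℝ)..p, g x * cos (r * x) := by
  have habs : ∫ x, g x * cos (r * x) = ∫ x, g |x| * cos (r * |x|) := by
    congr 1 with x
    rcases abs_choice x with h | h <;> simp [h, heven]
  rw [habs, integral_comp_abs (f := fun x => g x * cos (r * x)),
    intervalIntegral.integral_of_le hp,
    setIntegral_eq_of_subset_of_forall_sdiff_eq_zero measurableSet_Ioi Ioc_subset_Ioi_self]
  rintro x ⟨hx0, hxp⟩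
  simp only [mem_Ioi, mem_Ioc, not_and, not_le] at hx0 hxp
  rw [hsupp x (by rw [abs_of_pos hx0]; exact hxp hx0), zero_mul]

lemma nonneg_of_continuous_of_nonneg_off_countable {f : ℝ → ℝ} (hf : Continuous f) {s : Set ℝ}
    (hs : s.Countable) (h : ∀ x ∉ s, 0 ≤ f x) : ∀ x, 0 ≤ f x := fun x =>
  (isClosed_le continuous_const hf).closure_subset_iff.2 h
    ((hs.dense_compl ℝ).closure_eq ▸ mem_univ x)

lemma integral_mul_exp_I_mul_of_radial {p : ℝ} (hp : 0 ≤ p) {φ g : ℝ → ℝ} (hφ : Continuous φ)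
    (hg : ∀ x, g x = if |x| ≤ p then φ |x| else 0) (r : ℝ) :
    ∫ x, (g x : ℂ) * Complex.exp (Complex.I * r * x)
      = ((2 * ∫ x in (0:ℝ)..p, φ x * cos (r * x) : ℝ) : ℂ) := by
  have heven : ∀ x, g (-x) = g x := fun x => by rw [hg, hg, abs_neg]
  have hsupp : ∀ x, p < |x| → g x = 0 := fun x hx => by rw [hg, if_neg (not_le.2 hx)]
  have hint : Integrable g := by
    refine ContinuousOn.integrableOn_Icc (a := -p) (b := p) ?_ |>.integrable_of_forall_notMem_eq_zero
      fun x hx => hsupp x (by rwa [mem_Icc, ← abs_le, not_le] at hx)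
    exact (hφ.comp continuous_abs).continuousOn.congr fun x hx => by
      rw [hg, if_pos (abs_le.2 hx), Function.comp_apply]
  rw [integral_mul_exp_I_mul_of_even hint heven, integral_mul_cos_of_even_of_support hp heven hsupp]
  congr 2
  refine intervalIntegral.integral_congr fun x hx => ?_
  rw [uIcc_of_le hp, mem_Icc] at hx
  rw [hg, abs_of_nonneg hx.1, if_pos hx.2]

noncomputable def bumpProfile (p x : ℝ) : ℝ :=
  (4 * π * (1 - x / p) + 2 * π * (1 - x / p) * cos (2 * π * x / p) + 3 * sin (2 * π * x / p)) /
    (6 * π)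

lemma continuous_bumpProfile (p : ℝ) : Continuous (bumpProfile p) := by
  unfold bumpProfile
  fun_prop

lemma bumpProfile_mul_cos (p r x : ℝ) :
    bumpProfile p x * cos (r * x) =
      (4 * π * ((1 - x / p) * cos (r * x)) + π * ((1 - x / p) * cos ((r + 2 * π / p) * x))
        + π * ((1 - x / p) * cos ((r - 2 * π / p) * x))
        + 3 / 2 * (sin ((r + 2 * π / p) * x) - sin ((r - 2 * π / p) * x))) / (6 * π) := by
  rw [bumpProfile, show 2 * π * x / p = 2 * π / p * x by ring]
  simp only [add_mul, sub_mul, cos_add, cos_sub, sin_add, sin_sub]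
  ring

lemma integral_bumpProfile_mul_cos {p r : ℝ} (hp : 0 < p) (hr : r ≠ 0)
    (hpr : p ^ 2 * r ^ 2 ≠ 4 * π ^ 2) :
    ∫ x in (0:ℝ)..p, bumpProfile p x * cos (r * x) =
      64 * π ^ 4 * sin (p * r / 2) ^ 2 / (3 * p * r ^ 2 * (4 * π ^ 2 - p ^ 2 * r ^ 2) ^ 2) := by
  -- the factors of `4π² - p²r²` are written in the normal form that `field_simp` produces
  have hpr₁ : p * r + π * 2 ≠ 0 := fun h => hpr (by linear_combination (p * r - π * 2) * h)
  have hpr₂ : p * r - π * 2 ≠ 0 := fun h => hpr (by linear_combination (p * r + π * 2) * h)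
  have hpr₃ : 4 * π ^ 2 - p ^ 2 * r ^ 2 ≠ 0 := sub_ne_zero.2 hpr.symm
  have hk₁ : r + 2 * π / p = (p * r + π * 2) / p := by field_simp
  have hk₂ : r - 2 * π / p = (p * r - π * 2) / p := by field_simp
  have hcos₁ : cos ((r + 2 * π / p) * p) = cos (r * p) := by
    rw [add_mul, div_mul_cancel₀ _ hp.ne', cos_add_two_pi]
  have hcos₂ : cos ((r - 2 * π / p) * p) = cos (r * p) := by
    rw [sub_mul, div_mul_cancel₀ _ hp.ne', cos_sub_two_pi]
  have hcos : cos (r * p) = 1 - 2 * sin (p * r / 2) ^ 2 := by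
    rw [← cos_two_mul_eq_one_sub]
    ring_nf
  have hk₁0 : r + 2 * π / p ≠ 0 := hk₁ ▸ div_ne_zero hpr₁ hp.ne'
  have hk₂0 : r - 2 * π / p ≠ 0 := hk₂ ▸ div_ne_zero hpr₂ hp.ne'
  simp only [bumpProfile_mul_cos]
  rw [intervalIntegral.integral_div, intervalIntegral.integral_add, intervalIntegral.integral_add,
    intervalIntegral.integral_add, intervalIntegral.integral_const_mul,
    intervalIntegral.integral_const_mul, intervalIntegral.integral_const_mul,
    intervalIntegral.integral_const_mul, intervalIntegral.integral_sub,
    integral_one_sub_div_mul_cos hp.ne' hr, integral_one_sub_div_mul_cos hp.ne' hk₁0,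
    integral_one_sub_div_mul_cos hp.ne' hk₂0, integral_sin_mul_eq hk₁0, integral_sin_mul_eq hk₂0,
    hcos₁, hcos₂, hcos, hk₁, hk₂]
  · field_simp [hpr₁, hpr₂, hpr₃]
    ring
  all_goals exact (by fun_prop : Continuous _).intervalIntegrable _ _

lemma integral_bumpProfile_mul_cos_nonneg {p : ℝ} (hp : 0 < p) (r : ℝ) :
    0 ≤ ∫ x in (0:ℝ)..p, bumpProfile p x * cos (r * x) := by
  have hcont := continuous_bumpProfile p
  revert r
  refine nonneg_of_continuous_of_nonneg_off_countable (by fun_prop)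
    (s := {0, 2 * π / p, -(2 * π / p)}) (by simp) fun r hr => ?_
  simp only [mem_insert_iff, mem_singleton_iff, not_or] at hr
  obtain ⟨hr0, hr₁, hr₂⟩ := hr
  have hpr : p ^ 2 * r ^ 2 ≠ 4 * π ^ 2 := by
    intro h
    have : (r - 2 * π / p) * (r + 2 * π / p) = 0 := by
      field_simp
      linear_combination h
    rcases mul_eq_zero.1 this with h | h
    exacts [hr₁ (sub_eq_zero.1 h), hr₂ (eq_neg_of_add_eq_zero_left h)]
  rw [integral_bumpProfile_mul_cos hp hr0 hpr]
  positivity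

theorem stmt_4 (p : ℝ) (hp : 0 < p) (g : ℝ → ℝ)
    (hg : ∀ x : ℝ, g x = if |x| ≤ p then
      (4*π*(1 - |x|/p) + 2*π*(1 - |x|/p) * Real.cos (2*π*x/p) + 3 * Real.sin (2*π*|x|/p)) / (6*π)
      else 0) :
    (∀ r : ℝ, r ≠ 0 → p^2 * r^2 ≠ 4*π^2 →
      ∫ x : ℝ, (g x : ℂ) * Complex.exp (Complex.I * r * x)
        = ((128 * π^4 * Real.sin (p*r/2)^2 / (3 * p * r^2 * (4*π^2 - p^2*r^2)^2) : ℝ) : ℂ)) ∧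
    (∀ r : ℝ, 0 ≤ (∫ x : ℝ, (g x : ℂ) * Complex.exp (Complex.I * r * x)).re) := by
  have hg' : ∀ x, g x = if |x| ≤ p then bumpProfile p |x| else 0 := by
    intro x
    rcases abs_choice x with h | h <;> simp [hg, bumpProfile, h, neg_div]
  have hfourier := integral_mul_exp_I_mul_of_radial hp.le (continuous_bumpProfile p) hg'
  refine ⟨fun r hr hpr => ?_, fun r => ?_⟩
  · rw [hfourier, integral_bumpProfile_mul_cos hp hr hpr]
    push_cast
    ring
  · rw [hfourier, Complex.ofReal_re]
    exact mul_nonneg zero_le_two (integral_bumpProfile_mul_cos_nonneg hp r)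
end

section
/- Let p > 0 and let f : ℝ → ℝ be defined by f(x) = cos(πx/p) for |x| ≤ p/2 and f(x) = 0 for |x| > p/2. Then the self-convolution (f ⋆ f)(x) = ∫_ℝ f(t) f(x - t) dt satisfies: (f ⋆ f)(x) = (p/2)·((1 - |x|/p)·cos(πx/p) + (1/π)·sin(π|x|/p)) for |x| ≤ p, and (f ⋆ f)(x) = 0 for |x| ≥ p. -/
open MeasureTheory Real

/-!
On its support the integrand is `cos (c t) cos (c (x - t))` with `c = π / p`, which has the
elementary primitive `t cos (c x) / 2 + sin (c (2t - x)) / (4c)`. For `0 ≤ x ≤ p` the supports of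
`t ↦ f t` and `t ↦ f (x - t)` overlap in `[x - p/2, p/2]`, and the evaluation of the primitive there
gives the formula; negative `x` follows because `f` is even. For `|x| ≥ p` the open supports
`|t| < p/2` and `|x - t| < p/2` are disjoint, since `f` vanishes at `± p/2`.
-/

theorem hasDerivAt_cos_mul_cos_sub_primitive {c : ℝ} (hc : c ≠ 0) (x t : ℝ) :
    HasDerivAt (fun t => cos (c * x) / 2 * t + sin (c * (2 * t - x)) / (4 * c))
      (cos (c * t) * cos (c * (x - t))) t := by
  have hlin : HasDerivAt (fun t => c * (2 * t - x)) (c * (2 * 1)) t :=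
    (((hasDerivAt_id t).const_mul 2).sub_const x).const_mul c
  refine (((hasDerivAt_id t).const_mul _).add
    (((hasDerivAt_sin _).comp t hlin).div_const (4 * c))).congr_deriv ?_
  rw [show c * x = c * t + c * (x - t) by ring, show c * (2 * t - x) = c * t - c * (x - t) by ring,
    cos_add, cos_sub]
  field_simp
  ring

theorem integral_cos_mul_cos_sub {c : ℝ} (hc : c ≠ 0) (x a b : ℝ) :
    ∫ t in a..b, cos (c * t) * cos (c * (x - t))
      = cos (c * x) / 2 * (b - a) + (sin (c * (2 * b - x)) - sin (c * (2 * a - x))) / (4 * c) := by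
  have hcont : Continuous fun t => cos (c * t) * cos (c * (x - t)) := by fun_prop
  rw [intervalIntegral.integral_eq_sub_of_hasDerivAt
    (fun t _ => hasDerivAt_cos_mul_cos_sub_primitive hc x t) (hcont.intervalIntegrable a b)]
  ring

noncomputable def truncCos (p x : ℝ) : ℝ :=
  if |x| ≤ p / 2 then cos (π * x / p) else 0

theorem truncCos_neg (p x : ℝ) : truncCos p (-x) = truncCos p x := by
  simp only [truncCos, abs_neg, mul_neg, neg_div, cos_neg]

theorem abs_lt_of_truncCos_ne_zero {p x : ℝ} (hp : 0 < p) (h : truncCos p x ≠ 0) : |x| < p / 2 := by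
  unfold truncCos at h
  split_ifs at h with hx
  · refine lt_of_le_of_ne hx fun hx' => h ?_
    rw [← cos_abs, abs_div, abs_mul, abs_of_pos pi_pos, abs_of_pos hp, hx']
    field_simp
    exact cos_pi_div_two
  · exact absurd rfl h

theorem integral_truncCos_mul_truncCos_neg_sub (p x : ℝ) :
    ∫ t, truncCos p t * truncCos p (-x - t) = ∫ t, truncCos p t * truncCos p (x - t) := by
  rw [← integral_neg_eq_self]
  congr 1 with t
  rw [truncCos_neg, ← truncCos_neg p (-x - -t), neg_sub, sub_neg_eq_add, add_comm, ← sub_eq_add_neg]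

theorem truncCos_mul_truncCos_sub_eq_indicator {p x : ℝ} (hx0 : 0 ≤ x) (t : ℝ) :
    truncCos p t * truncCos p (x - t)
      = (Set.Icc (x - p / 2) (p / 2)).indicator
          (fun t => cos (π / p * t) * cos (π / p * (x - t))) t := by
  have hsupp : t ∈ Set.Icc (x - p / 2) (p / 2) ↔ |t| ≤ p / 2 ∧ |x - t| ≤ p / 2 := by
    simp only [Set.mem_Icc, abs_le]
    constructor
    · rintro ⟨h₁, h₂⟩
      exact ⟨⟨by linarith, h₂⟩, by linarith, by linarith⟩
    · rintro ⟨⟨-, h₂⟩, -, h₃⟩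
      exact ⟨by linarith, h₂⟩
  simp only [Set.indicator_apply, hsupp]
  by_cases h₁ : |t| ≤ p / 2 <;> by_cases h₂ : |x - t| ≤ p / 2 <;>
    simp [truncCos, h₁, h₂, mul_div_right_comm π]

theorem integral_truncCos_mul_truncCos_sub_of_nonneg {p x : ℝ} (hp : 0 < p) (hx0 : 0 ≤ x)
    (hxp : x ≤ p) :
    ∫ t, truncCos p t * truncCos p (x - t)
      = (p / 2) * ((1 - x / p) * cos (π * x / p) + (1 / π) * sin (π * x / p)) := by
  have hc : π / p ≠ 0 := (div_pos pi_pos hp).ne'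
  rw [integral_congr_ae (.of_forall (truncCos_mul_truncCos_sub_eq_indicator hx0)),
    integral_indicator measurableSet_Icc, integral_Icc_eq_integral_Ioc,
    ← intervalIntegral.integral_of_le (by linarith), integral_cos_mul_cos_sub hc]
  have hb : π / p * (2 * (p / 2) - x) = π - π * x / p := by field_simp
  have ha : π / p * (2 * (x - p / 2) - x) = π * x / p - π := by field_simp; ring
  rw [hb, ha, sin_pi_sub, sin_sub_pi, ← mul_div_right_comm]
  field_simp
  ring

theorem integral_truncCos_mul_truncCos_sub_of_le_abs {p x : ℝ} (hp : 0 < p) (hx : p ≤ |x|) :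
    ∫ t, truncCos p t * truncCos p (x - t) = 0 := by
  have hzero (t : ℝ) : truncCos p t * truncCos p (x - t) = 0 := by
    by_contra h
    obtain ⟨ht, hxt⟩ := mul_ne_zero_iff.mp h
    linarith [abs_sub_abs_le_abs_sub x t, abs_lt_of_truncCos_ne_zero hp ht,
      abs_lt_of_truncCos_ne_zero hp hxt]
  simp only [hzero, integral_zero]

theorem stmt_6 (p : ℝ) (hp : 0 < p) (f : ℝ → ℝ)
    (hf : ∀ x : ℝ, f x = if |x| ≤ p/2 then Real.cos (π * x / p) else 0) :
    (∀ x : ℝ, |x| ≤ p → ∫ t : ℝ, f t * f (x - t)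
        = (p/2) * ((1 - |x|/p) * Real.cos (π*x/p) + (1/π) * Real.sin (π*|x|/p))) ∧
    (∀ x : ℝ, p ≤ |x| → ∫ t : ℝ, f t * f (x - t) = 0) := by
  obtain rfl : f = truncCos p := funext hf
  refine ⟨fun x hx => ?_, fun x hx => integral_truncCos_mul_truncCos_sub_of_le_abs hp hx⟩
  rcases le_total 0 x with hx0 | hx0
  · rw [abs_of_nonneg hx0]
    exact integral_truncCos_mul_truncCos_sub_of_nonneg hp hx0 ((le_abs_self x).trans hx)
  · have := integral_truncCos_mul_truncCos_sub_of_nonneg hp (neg_nonneg.mpr hx0)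
      ((neg_le_abs x).trans hx)
    rw [integral_truncCos_mul_truncCos_neg_sub] at this
    rw [this, abs_of_nonpos hx0, mul_neg, neg_div p (π * x), cos_neg]
end

section
/- Let n ≥ 2 be an integer, d > 0, and let s : ℝ → ℝ be continuously differentiable. Suppose x ∈ ℝⁿ satisfies Σ_j x_j = 0 and Σ_j x_j² = d, and x is a local extremum of the function y ↦ Σ_j s(y_j) restricted to the set {y ∈ ℝⁿ : Σ_j y_j = 0 and Σ_j y_j² = d}. Then there exist real constants c₁, c₂ such that s'(x_j) = c₁·x_j + c₂ for every j. Consequently, if for all real c₁, c₂ the set {t ∈ ℝ : s'(t) = c₁t + c₂} has at most three elements, then the coordinates x_1, ..., x_n assume at most three distinct values. -/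
/-!
Lagrange multipliers for `y ↦ ∑ j, s (y j)` under the constraints `∑ y = a`, `∑ y² = b` give
`l₀ + l₁ xⱼ + l₂ s'(xⱼ) = 0` for all `j`, with `(l₀, l₁, l₂) ≠ 0`. If `l₂ = 0`, the affine function
`t ↦ l₀ + l₁ t` would vanish at two distinct coordinates of `x`, forcing `l₀ = l₁ = 0`; and `x` is not
constant because a constant vector with zero sum has zero norm. Dividing by `l₂` gives the line.
-/

section

variable {ι : Type*} [Fintype ι]

def weightedSum (c : ι → ℝ) : (ι → ℝ) →L[ℝ] ℝ := ∑ j, c j • ContinuousLinearMap.proj j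

@[simp]
theorem weightedSum_apply (c v : ι → ℝ) : weightedSum c v = ∑ j, c j * v j := by
  simp [weightedSum]

theorem weightedSum_apply_single [DecidableEq ι] (c : ι → ℝ) (j : ι) :
    weightedSum c (Pi.single j 1) = c j := by
  simp [Pi.single_apply]

theorem hasStrictFDerivAt_sum_comp_apply {g g' : ℝ → ℝ} {x : ι → ℝ}
    (hg : ∀ j, HasStrictDerivAt g (g' (x j)) (x j)) :
    HasStrictFDerivAt (fun y : ι → ℝ => ∑ j, g (y j)) (weightedSum fun j => g' (x j)) x := by
  refine HasStrictFDerivAt.fun_sum fun j _ => ?_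
  convert (hg j).hasStrictFDerivAt.comp x (hasStrictFDerivAt_apply (𝕜 := ℝ) j x) using 1
  ext v
  simp [mul_comm]

theorem IsLocalExtrOn.exists_multipliers_sum_comp {s : ℝ → ℝ} {x : ι → ℝ} {a b : ℝ}
    (hs : ∀ j, ContDiffAt ℝ 1 s (x j)) (hxa : ∑ j, x j = a) (hxb : ∑ j, x j ^ 2 = b)
    (hext : IsLocalExtrOn (fun y : ι → ℝ => ∑ j, s (y j))
      {y : ι → ℝ | ∑ j, y j = a ∧ ∑ j, y j ^ 2 = b} x) :
    ∃ l₀ l₁ l₂ : ℝ, (l₀, l₁, l₂) ≠ 0 ∧ ∀ j, l₀ + l₁ * x j + l₂ * deriv s (x j) = 0 := by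
  classical
  let f : Fin 2 → (ι → ℝ) → ℝ := ![fun y => ∑ j, y j, fun y => ∑ j, y j ^ 2]
  have hf : ∀ i, HasStrictFDerivAt (f i)
      (![weightedSum 1, weightedSum fun j => 2 * x j] i) x := by
    intro i
    fin_cases i
    · exact hasStrictFDerivAt_sum_comp_apply (g' := 1) fun j => hasStrictDerivAt_id (x j)
    · exact hasStrictFDerivAt_sum_comp_apply (g' := fun t => 2 * t) fun j => by
        simpa using hasStrictDerivAt_pow 2 (x j)
  have hφ := hasStrictFDerivAt_sum_comp_apply fun j => (hs j).hasStrictDerivAt one_ne_zero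
  have hext' : IsLocalExtrOn (fun y : ι → ℝ => ∑ j, s (y j)) {y | ∀ i, f i y = f i x} x := by
    convert hext using 2
    simp [f, Fin.forall_fin_two, hxa, hxb]
  obtain ⟨Λ, Λ₀, hne, hΛ⟩ := hext'.exists_multipliers_of_hasStrictFDerivAt hf hφ
  refine ⟨Λ 0, 2 * Λ 1, Λ₀, ?_, fun j => ?_⟩
  · contrapose! hne
    simp only [Prod.mk_eq_zero, mul_eq_zero, OfNat.ofNat_ne_zero, false_or] at hne
    ext i
    · fin_cases i <;> simp [hne]
    · simp [hne]
  · have := congrArg (· (Pi.single j 1)) hΛ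
    simp only [Fin.sum_univ_two, Matrix.cons_val_zero, Matrix.cons_val_one, Matrix.cons_val_fin_one,
      add_apply, smul_apply, zero_apply, smul_eq_mul, weightedSum_apply_single, Pi.one_apply] at this
    linear_combination this

theorem IsLocalExtrOn.exists_deriv_eq_affine {s : ℝ → ℝ} {x : ι → ℝ} {a b : ℝ}
    (hs : ∀ j, ContDiffAt ℝ 1 s (x j)) (hxa : ∑ j, x j = a) (hxb : ∑ j, x j ^ 2 = b)
    (hext : IsLocalExtrOn (fun y : ι → ℝ => ∑ j, s (y j))
      {y : ι → ℝ | ∑ j, y j = a ∧ ∑ j, y j ^ 2 = b} x)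
    (hx : ∃ i j, x i ≠ x j) :
    ∃ c₁ c₂ : ℝ, ∀ j, deriv s (x j) = c₁ * x j + c₂ := by
  obtain ⟨l₀, l₁, l₂, hne, hl⟩ := IsLocalExtrOn.exists_multipliers_sum_comp hs hxa hxb hext
  have hl₂ : l₂ ≠ 0 := by
    rintro rfl
    obtain ⟨i, j, hij⟩ := hx
    have hl₁ : l₁ = 0 := by
      have : l₁ * (x i - x j) = 0 := by linear_combination hl i - hl j
      exact (mul_eq_zero.1 this).resolve_right (sub_ne_zero.2 hij)
    have hl₀ : l₀ = 0 := by simpa [hl₁] using hl i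
    simp [hl₀, hl₁] at hne
  refine ⟨-l₁ / l₂, -l₀ / l₂, fun j => ?_⟩
  field_simp
  linear_combination hl j

theorem exists_ne_of_sum_eq_zero_of_sum_sq_ne_zero {x : ι → ℝ} (h₁ : ∑ j, x j = 0)
    (h₂ : ∑ j, x j ^ 2 ≠ 0) : ∃ i j, x i ≠ x j := by
  by_contra! hconst
  obtain ⟨i, -⟩ := Finset.exists_ne_zero_of_sum_ne_zero h₂
  refine h₂ ?_
  calc ∑ j, x j ^ 2 = ∑ j, x i * x j :=
        Finset.sum_congr rfl fun j _ => by rw [hconst j i]; ring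
    _ = 0 := by rw [← Finset.mul_sum, h₁, mul_zero]

end

theorem stmt_13_general (n : ℕ) (d : ℝ) (hd : 0 < d)
    (s : ℝ → ℝ) (hs : ContDiff ℝ 1 s)
    (x : Fin n → ℝ) (hx1 : ∑ j, x j = 0) (hx2 : ∑ j, (x j)^2 = d)
    (hext : IsLocalExtrOn (fun y : Fin n → ℝ => ∑ j, s (y j))
      {y : Fin n → ℝ | ∑ j, y j = 0 ∧ ∑ j, (y j)^2 = d} x) :
    (∃ c₁ c₂ : ℝ, ∀ j, deriv s (x j) = c₁ * x j + c₂) ∧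
    ((∀ c₁ c₂ : ℝ, {t : ℝ | deriv s t = c₁ * t + c₂}.encard ≤ 3)
      → (Set.range x).encard ≤ 3) := by
  have hx : ∃ i j, x i ≠ x j := exists_ne_of_sum_eq_zero_of_sum_sq_ne_zero hx1 (hx2 ▸ hd.ne')
  obtain ⟨c₁, c₂, hc⟩ := hext.exists_deriv_eq_affine (fun _ => hs.contDiffAt) hx1 hx2 hx
  refine ⟨⟨c₁, c₂, hc⟩, fun hcard => (Set.encard_mono ?_).trans (hcard c₁ c₂)⟩
  rintro _ ⟨j, rfl⟩
  exact hc j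

theorem stmt_13 (n : ℕ) (hn : 2 ≤ n) (d : ℝ) (hd : 0 < d)
    (s : ℝ → ℝ) (hs : ContDiff ℝ 1 s)
    (x : Fin n → ℝ) (hx1 : ∑ j, x j = 0) (hx2 : ∑ j, (x j)^2 = d)
    (hext : IsLocalExtrOn (fun y : Fin n → ℝ => ∑ j, s (y j))
      {y : Fin n → ℝ | ∑ j, y j = 0 ∧ ∑ j, (y j)^2 = d} x) :
    (∃ c₁ c₂ : ℝ, ∀ j, deriv s (x j) = c₁ * x j + c₂) ∧
    ((∀ c₁ c₂ : ℝ, {t : ℝ | deriv s t = c₁ * t + c₂}.encard ≤ 3)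
      → (Set.range x).encard ≤ 3) :=
  stmt_13_general n d hd s hs x hx1 hx2 hext
end
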